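/- arXiv:2503.04518 — 3 statements merged into one kernel-verified Lean document; each statement's English description precedes it below -/
import Mathlib

section
/- Suppose p : A → [0,1] is a probability vector on a finite set A. If for all a, a' we have (E[R_a | A*=a'] - E[R_a])² ≤ 2σ² KL_{a,a'}, with I = ∑_{a,a'} p(a)p(a') KL_{a,a'}, and the per-step regret equals ∑_a p(a)(E[R_a|A*=a] - E[R_a]), then the information ratio Γ = (regret)²/I satisfies Γ ≤ 2|A|σ². -/
/-- The information ratio of an admissible probability matching algorithm with
`σ`-sub-Gaussian rewards is bounded: `(per-step regret)² ≤ 2|A|σ²·I`. -/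
theorem information_ratio_le {A : Type*} [Fintype A]
    (p : A → ℝ) (hp : ∀ a, 0 ≤ p a) (hsum : ∑ a, p a = 1)
    (σ : ℝ) (Δ KL : A → A → ℝ) (hKL : ∀ a a', 0 ≤ KL a a')
    (hbound : ∀ a a', (Δ a a') ^ 2 ≤ 2 * σ ^ 2 * KL a a')
    (regret I : ℝ)
    (hreg : regret = ∑ a, p a * Δ a a)
    (hI : I = ∑ a, ∑ a', p a * p a' * KL a a') :
    regret ^ 2 ≤ 2 * (Fintype.card A : ℝ) * σ ^ 2 * I := by
  have h1 : regret ^ 2 ≤ (Fintype.card A : ℝ) * ∑ a, (p a * Δ a a) ^ 2 := by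
    rw [hreg]
    have h := sq_sum_le_card_mul_sum_sq (s := (Finset.univ : Finset A))
      (f := fun a => p a * Δ a a)
    rwa [Finset.card_univ] at h
  have h2 : ∑ a, (p a * Δ a a) ^ 2 ≤ 2 * σ ^ 2 * ∑ a, p a * p a * KL a a := by
    rw [Finset.mul_sum]
    refine Finset.sum_le_sum fun a _ => ?_
    have := mul_le_mul_of_nonneg_left (hbound a a) (mul_self_nonneg (p a))
    calc (p a * Δ a a) ^ 2 = p a * p a * Δ a a ^ 2 := by ring
      _ ≤ p a * p a * (2 * σ ^ 2 * KL a a) := this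
      _ = 2 * σ ^ 2 * (p a * p a * KL a a) := by ring
  have h3 : ∑ a, p a * p a * KL a a ≤ I := by
    rw [hI]
    refine Finset.sum_le_sum fun a _ => ?_
    refine Finset.single_le_sum (f := fun a' => p a * p a' * KL a a') (fun a' _ => ?_)
      (Finset.mem_univ a)
    exact mul_nonneg (mul_nonneg (hp a) (hp a')) (hKL a a')
  have hσ : (0:ℝ) ≤ 2 * σ ^ 2 := by positivity
  calc regret ^ 2 ≤ (Fintype.card A : ℝ) * ∑ a, (p a * Δ a a) ^ 2 := h1
    _ ≤ (Fintype.card A : ℝ) * (2 * σ ^ 2 * ∑ a, p a * p a * KL a a) := by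
        exact mul_le_mul_of_nonneg_left h2 (Nat.cast_nonneg _)
    _ ≤ (Fintype.card A : ℝ) * (2 * σ ^ 2 * I) := by
        exact mul_le_mul_of_nonneg_left (mul_le_mul_of_nonneg_left h3 hσ) (Nat.cast_nonneg _)
    _ = 2 * (Fintype.card A : ℝ) * σ ^ 2 * I := by ring
end

section
/- Under a probability-matching policy, i.e. P_t(A_t = a) = P_t(A* = a) for all a, the conditional expected per-step regret decomposes as E_t[R_{t,A*} - R_{t,A_t}] = ∑_{a∈A} P_t(A* = a) · (E_t[R_{t,a} | A* = a] - E_t[R_{t,a}]). -/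
open MeasureTheory ProbabilityTheory

lemma setIntegral_eq_cond {Ω : Type*} [MeasurableSpace Ω] (μ : Measure Ω)
    [IsFiniteMeasure μ] (s : Set Ω) (f : Ω → ℝ) :
    ∫ ω in s, f ω ∂μ = (μ s).toReal * ∫ ω, f ω ∂(μ[|s]) := by
  by_cases h : μ s = 0
  · rw [Measure.restrict_eq_zero.mpr h, ProbabilityTheory.cond, h]
    simp
  · rw [ProbabilityTheory.cond, integral_smul_measure, smul_eq_mul, ← mul_assoc,
      ENNReal.toReal_inv, mul_inv_cancel₀, one_mul]
    exact ENNReal.toReal_ne_zero.mpr ⟨h, measure_ne_top μ s⟩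

lemma integral_comp_fiber {Ω A : Type*} [MeasurableSpace Ω] [Fintype A]
    [MeasurableSpace A] [MeasurableSingletonClass A]
    (μ : Measure Ω) [IsFiniteMeasure μ] (X : Ω → A) (hX : Measurable X)
    (R : A → Ω → ℝ) (hint : Integrable (fun ω => R (X ω) ω) μ) :
    ∫ ω, R (X ω) ω ∂μ = ∑ a, ∫ ω in X ⁻¹' {a}, R a ω ∂μ := by
  have hmeas : ∀ a : A, MeasurableSet (X ⁻¹' {a}) := fun a =>
    hX (measurableSet_singleton a)
  have huniv : (⋃ a ∈ (Finset.univ : Finset A), X ⁻¹' {a}) = Set.univ := by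
    ext ω; simp
  calc ∫ ω, R (X ω) ω ∂μ
      = ∫ ω in ⋃ a ∈ (Finset.univ : Finset A), X ⁻¹' {a}, R (X ω) ω ∂μ := by
        rw [huniv, Measure.restrict_univ]
    _ = ∑ a, ∫ ω in X ⁻¹' {a}, R (X ω) ω ∂μ := by
        apply integral_biUnion_finset
        · exact fun a _ => hmeas a
        · intro a _ b _ hab
          exact Set.disjoint_left.mpr fun ω ha hb => hab (ha.symm.trans hb)
        · exact fun a _ => hint.integrableOn
    _ = ∑ a, ∫ ω in X ⁻¹' {a}, R a ω ∂μ := by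
        refine Finset.sum_congr rfl fun a _ => ?_
        refine setIntegral_congr_fun (hmeas a) fun ω hω => ?_
        have : X ω = a := hω
        rw [this]


/-- Under a probability-matching policy, the conditional expected per-step regret
decomposes as
`E[R_{A*} - R_{A_t}] = ∑_a P(A* = a) (E[R_a | A* = a] - E[R_a])`. -/
theorem probability_matching_regret_decomposition
    {Ω A : Type*} [MeasurableSpace Ω] [Fintype A] [MeasurableSpace A]
    [MeasurableSingletonClass A]
    (μ : Measure Ω) [IsProbabilityMeasure μ]
    (Astar At : Ω → A) (hAstar : Measurable Astar) (hAt : Measurable At)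
    (R : A → Ω → ℝ) (hR : ∀ a, Measurable (R a)) (hint : ∀ a, Integrable (R a) μ)
    (hintstar : Integrable (fun ω => R (Astar ω) ω) μ)
    (hintt : Integrable (fun ω => R (At ω) ω) μ)
    -- probability matching: `P(A_t = a) = P(A* = a)`
    (hmatch : ∀ a, μ (At ⁻¹' {a}) = μ (Astar ⁻¹' {a}))
    -- `A_t` is independent of the rewards: `E[R_a | A_t = a] = E[R_a]`
    (hindep : ∀ a, (∫ ω, R a ω ∂(μ[|At ⁻¹' {a}])) = ∫ ω, R a ω ∂μ) :
    (∫ ω, (R (Astar ω) ω - R (At ω) ω) ∂μ) =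
      ∑ a, (μ (Astar ⁻¹' {a})).toReal *
        ((∫ ω, R a ω ∂(μ[|Astar ⁻¹' {a}])) - ∫ ω, R a ω ∂μ) := by
  rw [integral_sub hintstar hintt,
    integral_comp_fiber μ Astar hAstar R hintstar,
    integral_comp_fiber μ At hAt R hintt]
  have h1 : ∀ a : A, ∫ ω in Astar ⁻¹' {a}, R a ω ∂μ =
      (μ (Astar ⁻¹' {a})).toReal * ∫ ω, R a ω ∂(μ[|Astar ⁻¹' {a}]) :=
    fun a => setIntegral_eq_cond μ _ _
  have h2 : ∀ a : A, ∫ ω in At ⁻¹' {a}, R a ω ∂μ =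
      (μ (Astar ⁻¹' {a})).toReal * ∫ ω, R a ω ∂μ := by
    intro a
    rw [setIntegral_eq_cond μ _ _, hindep a, hmatch a]
  simp only [h1, h2, mul_sub, Finset.sum_sub_distrib]
end

section
/- For V_i i.i.d. Beta(1,α) and stick-breaking weights q_i = V_i ∏_{j<i}(1-V_j), the expected sum of r-th powers of tail weights satisfies E[∑_{i=N}^∞ q_i^r] = (α/(α+r))^{N-1} · Γ(r)Γ(α+1)/Γ(α+r) for integer r ≥ 1. -/
open MeasureTheory ProbabilityTheory
open scoped NNReal ENNReal

/-- The `Beta(1, α)` distribution, with density `α (1-v)^{α-1}` on `[0,1]`. -/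
noncomputable def betaOne (α : ℝ) : Measure ℝ :=
  (volume.restrict (Set.Icc (0:ℝ) 1)).withDensity
    (fun v => ENNReal.ofReal (α * (1 - v) ^ (α - 1)))


lemma realBeta (r : ℕ) {β : ℝ} (hβ : 0 < β) :
    ∫ x in (0:ℝ)..1, x ^ r * (1 - x) ^ (β - 1)
      = Real.Gamma (r + 1) * Real.Gamma β / Real.Gamma (β + r + 1) := by
  have hB : Complex.betaIntegral ((r : ℂ) + 1) (β : ℂ)
      = ((∫ x in (0:ℝ)..1, x ^ r * (1 - x) ^ (β - 1) : ℝ) : ℂ) := by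
    rw [Complex.betaIntegral, ← intervalIntegral.integral_ofReal]
    apply intervalIntegral.integral_congr
    intro x hx
    rw [Set.uIcc_of_le zero_le_one] at hx
    have h1x : (0:ℝ) ≤ 1 - x := by linarith [hx.2]
    have e1 : ((x:ℂ)) ^ ((r:ℂ) + 1 - 1) = ((x ^ r : ℝ) : ℂ) := by
      rw [add_sub_cancel_right, Complex.cpow_natCast]; push_cast; ring
    have e2 : (1 - (x:ℂ)) ^ ((β:ℂ) - 1) = (((1 - x) ^ (β - 1) : ℝ) : ℂ) := by
      rw [show (1 - (x:ℂ)) = (((1 - x : ℝ)) : ℂ) by push_cast; ring,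
        show ((β:ℂ) - 1) = (((β - 1 : ℝ)) : ℂ) by push_cast; ring,
        ← Complex.ofReal_cpow h1x]
    dsimp only
    rw [e1, e2, ← Complex.ofReal_mul]
  have h := Complex.Gamma_mul_Gamma_eq_betaIntegral (s := (r : ℂ) + 1) (t := (β : ℂ))
      (by simp; positivity) (by simpa using hβ)
  have hne : Complex.Gamma ((r:ℂ) + 1 + β) ≠ 0 := by
    apply Complex.Gamma_ne_zero
    intro m hm
    have := congrArg Complex.re hm
    simp at this
    have : (0:ℝ) < (r:ℝ) + 1 + β := by positivity
    nlinarith [this]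
  rw [hB] at h
  have hval : ((∫ x in (0:ℝ)..1, x ^ r * (1 - x) ^ (β - 1) : ℝ) : ℂ)
      = Complex.Gamma ((r:ℂ) + 1) * Complex.Gamma (β:ℂ) / Complex.Gamma ((r:ℂ) + 1 + β) := by
    rw [eq_div_iff hne]
    linear_combination -h
  rw [show ((r:ℂ) + 1) = (((r:ℝ) + 1 : ℝ) : ℂ) by push_cast; ring,
    show ((((r:ℝ) + 1 : ℝ)) : ℂ) + (β:ℂ) = ((β + r + 1 : ℝ) : ℂ) by push_cast; ring,
    Complex.Gamma_ofReal, Complex.Gamma_ofReal, Complex.Gamma_ofReal,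
    ← Complex.ofReal_mul, ← Complex.ofReal_div] at hval
  exact_mod_cast hval

lemma betaOne_integral (α : ℝ) (hα : 0 < α) (g : ℝ → ℝ) :
    ∫ x, g x ∂(betaOne α)
      = ∫ x in (0:ℝ)..1, (α * (1 - x) ^ (α - 1)) * g x := by
  rw [betaOne]
  have : (fun v => ENNReal.ofReal (α * (1 - v) ^ (α - 1)))
      = fun v => (((α * (1 - v) ^ (α - 1)).toNNReal : ℝ≥0) : ℝ≥0∞) := rfl
  rw [this, integral_withDensity_eq_integral_smul
    (by fun_prop : Measurable fun v : ℝ => (α * (1 - v) ^ (α - 1)).toNNReal)]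
  rw [intervalIntegral.integral_of_le zero_le_one, ← integral_Icc_eq_integral_Ioc]
  apply setIntegral_congr_fun measurableSet_Icc
  intro x hx
  have : (0:ℝ) ≤ α * (1 - x) ^ (α - 1) :=
    mul_nonneg hα.le (Real.rpow_nonneg (by linarith [hx.2]) _)
  simp [NNReal.smul_def, Real.coe_toNNReal _ this]

lemma betaOne_moment (α : ℝ) (hα : 0 < α) (r : ℕ) :
    ∫ x, x ^ r ∂(betaOne α)
      = Real.Gamma (r + 1) * Real.Gamma (α + 1) / Real.Gamma (α + r + 1) := by
  rw [betaOne_integral α hα]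
  have e : ∀ x : ℝ, (α * (1 - x) ^ (α - 1)) * x ^ r = α * (x ^ r * (1 - x) ^ (α - 1)) :=
    fun x => by ring
  simp_rw [e, intervalIntegral.integral_const_mul, realBeta r hα,
    Real.Gamma_add_one hα.ne']
  ring

lemma betaOne_moment' (α : ℝ) (hα : 0 < α) (r : ℕ) (hr : 1 ≤ r) :
    ∫ x, (1 - x) ^ r ∂(betaOne α) = α / (α + r) := by
  have hαr : (0:ℝ) < α + r := by positivity
  rw [betaOne_integral α hα]
  have key : (∫ x in (0:ℝ)..1, (α * (1 - x) ^ (α - 1)) * (1 - x) ^ r)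
      = α * ∫ x in (0:ℝ)..1, x ^ (0:ℕ) * (1 - x) ^ (α + (r:ℝ) - 1) := by
    rw [← intervalIntegral.integral_const_mul]
    apply intervalIntegral.integral_congr
    intro x hx
    rw [Set.uIcc_of_le zero_le_one] at hx
    dsimp only
    rcases lt_or_eq_of_le hx.2 with h | h
    · have hpos : (0:ℝ) < 1 - x := by linarith
      rw [pow_zero, one_mul, ← Real.rpow_natCast (1 - x) r, mul_assoc, ← Real.rpow_add hpos,
        show α - 1 + (r:ℝ) = α + (r:ℝ) - 1 by ring]
    · rw [show (1:ℝ) - x = 0 by rw [← h]; ring]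
      have h1r : (1:ℝ) ≤ (r:ℝ) := by exact_mod_cast hr
      rw [zero_pow (by omega), Real.zero_rpow (by nlinarith : α + (r:ℝ) - 1 ≠ 0)]
      ring
  rw [key, realBeta 0 (by positivity : (0:ℝ) < α + r)]
  have h1 : Real.Gamma ((0:ℕ) + 1) = 1 := by norm_num [Real.Gamma_one]
  have h2 : Real.Gamma (α + (r:ℝ) + (0:ℕ) + 1) = (α + r) * Real.Gamma (α + r) := by
    rw [show α + (r:ℝ) + ((0:ℕ):ℝ) + 1 = (α + r) + 1 by push_cast; ring,
      Real.Gamma_add_one hαr.ne']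
  rw [h1, h2]
  have hG : Real.Gamma (α + r) ≠ 0 := (Real.Gamma_pos_of_pos hαr).ne'
  field_simp

/-- For stick-breaking weights `q_i = V_i ∏_{j<i}(1-V_j)` with `V_i` i.i.d.
`Beta(1,α)`, `E[∑_{i≥N} q_i^r] = (α/(α+r))^{N-1} Γ(r)Γ(α+1)/Γ(α+r)`. -/
theorem expected_sum_powers_tail_weights
    {Ω : Type*} [MeasurableSpace Ω] (μ : Measure Ω) [IsProbabilityMeasure μ]
    (α : ℝ) (hα : 0 < α) (V : ℕ → Ω → ℝ) (hmeas : ∀ i, Measurable (V i))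
    (hiid : iIndepFun V μ)
    (hlaw : ∀ i, Measure.map (V i) μ = betaOne α)
    (N r : ℕ) (hN : 1 ≤ N) (hr : 1 ≤ r) :
    (∫ ω, (∑' i : ℕ,
        (V (N - 1 + i) ω * ∏ j ∈ Finset.range (N - 1 + i), (1 - V j ω)) ^ r) ∂μ)
      = (α / (α + r)) ^ (N - 1) *
          (Real.Gamma r * Real.Gamma (α + 1) / Real.Gamma (α + r)) := by
  have h1r : (1:ℝ) ≤ (r:ℝ) := by exact_mod_cast hr
  have hαr : (0:ℝ) < α + r := by positivity
  set c : ℝ := α / (α + r) with hc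
  have hc0 : 0 ≤ c := by positivity
  have hc1 : c < 1 := by rw [hc, div_lt_one hαr]; linarith
  set m : ℝ := Real.Gamma (r + 1) * Real.Gamma (α + 1) / Real.Gamma (α + r + 1) with hm
  set f : ℕ → Ω → ℝ :=
    fun k ω => (V k ω * ∏ j ∈ Finset.range k, (1 - V j ω)) ^ r with hf
  have hmeasf : ∀ k, Measurable (f k) := fun k =>
    ((hmeas k).mul (Finset.measurable_prod _ fun j _ => measurable_const.sub (hmeas j))).pow_const r
  -- a.e. all V i in [0,1]
  have hVae : ∀ᵐ ω ∂μ, ∀ i, V i ω ∈ Set.Icc (0:ℝ) 1 := by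
    rw [ae_all_iff]
    intro i
    have h0 : μ (V i ⁻¹' (Set.Icc (0:ℝ) 1)ᶜ) = 0 := by
      have hmap : Measure.map (V i) μ ((Set.Icc (0:ℝ) 1)ᶜ) = 0 := by
        rw [hlaw i, betaOne, withDensity_apply _ measurableSet_Icc.compl,
          Measure.restrict_restrict measurableSet_Icc.compl]
        simp [Set.compl_inter_self]
      rwa [Measure.map_apply (hmeas i) measurableSet_Icc.compl] at hmap
    rw [ae_iff]
    exact h0
  -- a.e. bound on f k
  have hbound : ∀ᵐ ω ∂μ, ∀ k, f k ω ∈ Set.Icc (0:ℝ) 1 := by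
    filter_upwards [hVae] with ω hω k
    have h1 : ∀ j, (1 - V j ω) ∈ Set.Icc (0:ℝ) 1 := fun j =>
      ⟨by linarith [(hω j).2], by linarith [(hω j).1]⟩
    have hp0 : 0 ≤ ∏ j ∈ Finset.range k, (1 - V j ω) :=
      Finset.prod_nonneg fun j _ => (h1 j).1
    have hp1 : ∏ j ∈ Finset.range k, (1 - V j ω) ≤ 1 :=
      Finset.prod_le_one (fun j _ => (h1 j).1) fun j _ => (h1 j).2
    have hq0 : 0 ≤ V k ω * ∏ j ∈ Finset.range k, (1 - V j ω) :=
      mul_nonneg (hω k).1 hp0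
    have hq1 : V k ω * ∏ j ∈ Finset.range k, (1 - V j ω) ≤ 1 :=
      mul_le_one₀ (hω k).2 hp0 hp1
    exact ⟨pow_nonneg hq0 r, pow_le_one₀ hq0 hq1⟩
  have hint : ∀ k, Integrable (f k) μ := by
    intro k
    refine (integrable_const (1:ℝ)).mono' (hmeasf k).aestronglyMeasurable ?_
    filter_upwards [hbound] with ω hω
    rw [Real.norm_eq_abs, abs_of_nonneg (hω k).1]
    exact (hω k).2
  -- step A : integral of the product of (1-V_j)^r over range k
  have hW : iIndepFun
      (fun j => (fun x : ℝ => (1 - x) ^ r) ∘ V j) μ :=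
    hiid.comp _ fun j => (measurable_const.sub measurable_id).pow_const r
  have hWmeas : ∀ j, Measurable ((fun x : ℝ => (1 - x) ^ r) ∘ V j) := fun j =>
    (measurable_const.sub (hmeas j)).pow_const r
  have hone : ∀ i : ℕ, ∫ ω, (1 - V i ω) ^ r ∂μ = c := by
    intro i
    have : ∫ ω, (1 - V i ω) ^ r ∂μ = ∫ x, (1 - x) ^ r ∂(betaOne α) := by
      rw [← hlaw i]
      have hg : AEStronglyMeasurable (fun x : ℝ => (1 - x) ^ r) (Measure.map (V i) μ) :=
        ((measurable_const.sub measurable_id).pow_const r).aestronglyMeasurable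
      exact (integral_map (hmeas i).aemeasurable hg).symm
    rw [this, betaOne_moment' α hα r hr]
  have hA : ∀ k, ∫ ω, ∏ j ∈ Finset.range k, (1 - V j ω) ^ r ∂μ = c ^ k := by
    intro k
    induction k with
    | zero => simp
    | succ n ih =>
      have hindep := hW.indepFun_prod_range_succ hWmeas n
      have e1 : (fun ω => ∏ j ∈ Finset.range (n + 1), (1 - V j ω) ^ r)
          = fun ω => (∏ j ∈ Finset.range n, ((fun x : ℝ => (1 - x) ^ r) ∘ V j)) ω
              * ((fun x : ℝ => (1 - x) ^ r) ∘ V n) ω := by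
        funext ω
        simp [Finset.prod_apply, Finset.prod_range_succ, Function.comp]
      have e2 : (∏ j ∈ Finset.range n, ((fun x : ℝ => (1 - x) ^ r) ∘ V j))
          = fun ω => ∏ j ∈ Finset.range n, (1 - V j ω) ^ r := by
        funext ω; simp [Finset.prod_apply, Function.comp]
      rw [e1, hindep.integral_fun_mul_eq_mul_integral
        (by rw [e2]
            exact (Finset.measurable_prod _ fun j _ =>
              (measurable_const.sub (hmeas j)).pow_const r).aestronglyMeasurable)
        (hWmeas n).aestronglyMeasurable]
      rw [e2]
      have : ∫ ω, ((fun x : ℝ => (1 - x) ^ r) ∘ V n) ω ∂μ = c := hone n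
      rw [show integral μ ((fun x : ℝ => (1 - x) ^ r) ∘ V n)
          = ∫ ω, ((fun x : ℝ => (1 - x) ^ r) ∘ V n) ω ∂μ from rfl, this, ih]
      ring
  -- step B : integral of f k
  have hEk : ∀ k, ∫ ω, f k ω ∂μ = m * c ^ k := by
    intro k
    set g : ℕ → ℝ → ℝ :=
      fun j => if j = k then fun x => x ^ r else fun x => (1 - x) ^ r with hg
    have hgmeas : ∀ j, Measurable (g j) := by
      intro j
      rw [hg]
      dsimp only
      split_ifs
      · exact measurable_id.pow_const r
      · exact (measurable_const.sub measurable_id).pow_const r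
    have hT : iIndepFun (fun j => g j ∘ V j) μ :=
      hiid.comp g hgmeas
    have hTmeas : ∀ j, Measurable (g j ∘ V j) := fun j => (hgmeas j).comp (hmeas j)
    have hindep : IndepFun (∏ j ∈ Finset.range k, (g j ∘ V j)) (g k ∘ V k) μ :=
      hT.indepFun_finsetProd_of_notMem hTmeas (by simp)
    have e2 : (∏ j ∈ Finset.range k, (g j ∘ V j))
        = fun ω => ∏ j ∈ Finset.range k, (1 - V j ω) ^ r := by
      funext ω
      rw [Finset.prod_apply]
      refine Finset.prod_congr rfl fun j hj => ?_
      have : j ≠ k := by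
        have := Finset.mem_range.1 hj; omega
      simp [hg, Function.comp, if_neg this]
    have e3 : (g k ∘ V k) = fun ω => V k ω ^ r := by
      funext ω; simp [hg, Function.comp]
    have efk : f k = fun ω =>
        (∏ j ∈ Finset.range k, (g j ∘ V j)) ω * (g k ∘ V k) ω := by
      rw [e2, e3]
      funext ω
      rw [hf]
      dsimp only
      rw [mul_pow, ← Finset.prod_pow]
      ring
    rw [show (∫ ω, f k ω ∂μ) = integral μ (f k) from rfl, efk,
      hindep.integral_fun_mul_eq_mul_integral
        (by rw [e2]
            exact (Finset.measurable_prod _ fun j _ =>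
              (measurable_const.sub (hmeas j)).pow_const r).aestronglyMeasurable)
        (by rw [e3]; exact ((hmeas k).pow_const r).aestronglyMeasurable)]
    have hVr : integral μ (g k ∘ V k) = m := by
      rw [e3]
      have : ∫ ω, V k ω ^ r ∂μ = ∫ x, x ^ r ∂(betaOne α) := by
        rw [← hlaw k]
        have hg : AEStronglyMeasurable (fun x : ℝ => x ^ r) (Measure.map (V k) μ) :=
          (measurable_id.pow_const r).aestronglyMeasurable
        exact (integral_map (hmeas k).aemeasurable hg).symm
      rw [show integral μ (fun ω => V k ω ^ r) = ∫ ω, V k ω ^ r ∂μ from rfl, this,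
        betaOne_moment α hα r, hm]
    rw [hVr, e2, hA k]
    ring
  -- lintegral values and summability
  have hlk : ∀ k, (∫⁻ ω, ‖f k ω‖ₑ ∂μ) = ENNReal.ofReal (m * c ^ k) := by
    intro k
    rw [← hEk k, ofReal_integral_eq_lintegral_ofReal (hint k)
      (by filter_upwards [hbound] with ω hω; exact (hω k).1)]
    apply lintegral_congr_ae
    filter_upwards [hbound] with ω hω
    rw [← Real.enorm_eq_ofReal (hω k).1]
  have hm0 : 0 ≤ m := by
    rw [hm]
    have g1 := Real.Gamma_pos_of_pos (show (0:ℝ) < (r:ℝ) + 1 by positivity)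
    have g2 := Real.Gamma_pos_of_pos (show (0:ℝ) < α + 1 by positivity)
    have g3 := Real.Gamma_pos_of_pos (show (0:ℝ) < α + r + 1 by positivity)
    positivity
  have hsummable : Summable fun i : ℕ => m * c ^ (N - 1 + i) := by
    refine ((summable_geometric_of_lt_one hc0 hc1).mul_left (m * c ^ (N - 1))).congr ?_
    intro i
    rw [pow_add]; ring
  have hfin : (∑' i : ℕ, ∫⁻ ω, ‖f (N - 1 + i) ω‖ₑ ∂μ) ≠ ⊤ := by
    have : (∑' i : ℕ, ∫⁻ ω, ‖f (N - 1 + i) ω‖ₑ ∂μ)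
        = ENNReal.ofReal (∑' i : ℕ, m * c ^ (N - 1 + i)) := by
      rw [ENNReal.ofReal_tsum_of_nonneg (fun i => by positivity) hsummable]
      exact tsum_congr fun i => hlk (N - 1 + i)
    rw [this]
    exact ENNReal.ofReal_ne_top
  have hswap := integral_tsum
    (f := fun i : ℕ => f (N - 1 + i))
    (fun i => (hmeasf (N - 1 + i)).aestronglyMeasurable) hfin
  rw [show (∫ ω, (∑' i : ℕ,
        (V (N - 1 + i) ω * ∏ j ∈ Finset.range (N - 1 + i), (1 - V j ω)) ^ r) ∂μ)
      = ∫ ω, (∑' i : ℕ, f (N - 1 + i) ω) ∂μ from rfl, hswap]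
  have : (∑' i : ℕ, ∫ ω, f (N - 1 + i) ω ∂μ) = ∑' i : ℕ, m * c ^ (N - 1 + i) :=
    tsum_congr fun i => hEk (N - 1 + i)
  rw [this]
  have htsum : (∑' i : ℕ, m * c ^ (N - 1 + i)) = m * c ^ (N - 1) * (1 - c)⁻¹ := by
    have := tsum_geometric_of_lt_one hc0 hc1
    calc (∑' i : ℕ, m * c ^ (N - 1 + i))
        = ∑' i : ℕ, m * c ^ (N - 1) * c ^ i := by
          refine tsum_congr fun i => ?_
          rw [pow_add]; ring
      _ = m * c ^ (N - 1) * ∑' i : ℕ, c ^ i := tsum_mul_left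
      _ = m * c ^ (N - 1) * (1 - c)⁻¹ := by rw [this]
  rw [htsum]
  -- final algebra
  have hrne : (r:ℝ) ≠ 0 := by positivity
  have hGr : Real.Gamma ((r:ℝ) + 1) = r * Real.Gamma r := Real.Gamma_add_one hrne
  have hGar : Real.Gamma (α + (r:ℝ) + 1) = (α + r) * Real.Gamma (α + r) :=
    Real.Gamma_add_one hαr.ne'
  have hGarne : Real.Gamma (α + (r:ℝ)) ≠ 0 := (Real.Gamma_pos_of_pos hαr).ne'
  have h1c : 1 - c = (r:ℝ) / (α + r) := by
    rw [hc]; field_simp; ring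
  rw [hm, hGr, hGar, h1c]
  field_simp
end
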